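/- arXiv:1604.06135 — 2 statements merged into one kernel-verified Lean document; each statement's English description precedes it below -/
import Mathlib

section
/- Let F ⊆ P([n]) be an increasing family. Then the function p ↦ log_p(μ_p(F)) = log(μ_p(F)) / log(p) is monotone non-increasing on (0,1). -/
/-!
Write `μ(p) = μ_p(F)`. The derivative of `log μ / log p` has the sign of
`p μ' log p - μ log μ`, so it suffices to show `negMulLog μ ≤ negMulLog p * μ'` on `(0,1)`;
by Margulis–Russo this is the inequality `p I^p(F) ≥ μ_p(F) log_p μ_p(F)`.
It is proved by induction on the ground set: splitting off an element `a`,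
`μ_p(F) = (1 - p) μ_p(F₀) + p μ_p(F₁)` with `F₀ = {A ∌ a | A ∈ F}` and
`F₁ = {A ∌ a | A ∪ {a} ∈ F}`, increasing families with `F₀ ⊆ F₁`. The induction step then reduces
to the two-variable inequality
`negMulLog ((1 - p) a + p b) ≤ (1 - p) negMulLog a + p negMulLog b + negMulLog p (b - a)`
for `0 ≤ a ≤ b`, whose two sides differ by a concave function of `a` vanishing at `a = 0` and
`a = b`.
-/

open Finset

noncomputable def biasedMeasure (p : ℝ) (n : ℕ) (F : Finset (Finset (Fin n))) : ℝ :=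
  ∑ A ∈ F, p ^ A.card * (1 - p) ^ (n - A.card)

open Real

theorem concaveOn_negMulLog_convexCombination_gap {p b : ℝ} (hp₀ : 0 < p) (hp₁ : p < 1)
    (hb : 0 < b) :
    ConcaveOn ℝ (Set.Icc 0 b) fun x =>
      (1 - p) * negMulLog x + negMulLog p * (b - x) - negMulLog ((1 - p) * x + p * b) := by
  have hderiv : ∀ x ∈ Set.Ioo 0 b, HasDerivAt (fun x =>
      (1 - p) * negMulLog x + negMulLog p * (b - x) - negMulLog ((1 - p) * x + p * b))
      ((1 - p) * (log ((1 - p) * x + p * b) - log x) - negMulLog p) x := by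
    intro x hx
    have hc : (1 - p) * x + p * b ≠ 0 := by nlinarith [hx.1]
    have h₁ := (hasDerivAt_negMulLog hx.1.ne').const_mul (1 - p)
    have h₂ := ((hasDerivAt_id' x).const_sub b).const_mul (negMulLog p)
    have h₃ := (hasDerivAt_negMulLog hc).comp x
      (((hasDerivAt_id' x).const_mul (1 - p)).add_const (p * b))
    exact ((h₁.fun_add h₂).fun_sub h₃).congr_deriv (by ring)
  refine AntitoneOn.concaveOn_of_deriv (convex_Icc 0 b) (Continuous.continuousOn (by fun_prop))
    ?_ ?_ <;> rw [interior_Icc]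
  · exact fun x hx => (hderiv x hx).differentiableAt.differentiableWithinAt
  intro x hx y hy hxy
  rw [(hderiv x hx).deriv, (hderiv y hy).deriv]
  have hx₀ := hx.1
  have hy₀ := hy.1
  have hlog : log ((1 - p) * y + p * b) - log y ≤ log ((1 - p) * x + p * b) - log x := by
    rw [← log_div (by positivity) hy₀.ne', ← log_div (by positivity) hx₀.ne']
    apply log_le_log (by positivity)
    rw [div_le_div_iff₀ hy₀ hx₀]
    nlinarith [mul_le_mul_of_nonneg_left hxy (mul_pos hp₀ hb).le]
  nlinarith

theorem negMulLog_convexCombination_le {p a b : ℝ} (hp₀ : 0 < p) (hp₁ : p < 1) (ha : 0 ≤ a)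
    (hab : a ≤ b) :
    negMulLog ((1 - p) * a + p * b) ≤
      (1 - p) * negMulLog a + p * negMulLog b + negMulLog p * (b - a) := by
  obtain rfl | hb := (ha.trans hab).eq_or_lt
  · simp [le_antisymm hab ha]
  have h := (concaveOn_negMulLog_convexCombination_gap hp₀ hp₁ hb).min_le_of_mem_Icc
    (Set.left_mem_Icc.mpr hb.le) (Set.right_mem_Icc.mpr hb.le) ⟨ha, hab⟩
  simp only [negMulLog_zero, negMulLog_mul, mul_zero, sub_zero, zero_add, sub_self,
    add_zero] at h
  rw [show (1 - p) * b + p * b = b by ring] at h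
  rcases min_le_iff.mp h with h | h <;> linarith

theorem antitoneOn_log_div_log {f : ℝ → ℝ} (hf : Differentiable ℝ f)
    (hpos : ∀ p ∈ Set.Ioo (0 : ℝ) 1, 0 < f p)
    (h : ∀ p ∈ Set.Ioo (0 : ℝ) 1, negMulLog (f p) ≤ negMulLog p * deriv f p) :
    AntitoneOn (fun p => log (f p) / log p) (Set.Ioo 0 1) := by
  have hderiv : ∀ p ∈ Set.Ioo (0 : ℝ) 1, HasDerivAt (fun p => log (f p) / log p)
      ((deriv f p / f p * log p - log (f p) * p⁻¹) / log p ^ 2) p := fun p hp =>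
    ((hf p).hasDerivAt.log (hpos p hp).ne').fun_div (hasDerivAt_log hp.1.ne')
      (log_neg hp.1 hp.2).ne
  refine antitoneOn_of_deriv_nonpos (convex_Ioo 0 1)
    (fun p hp => (hderiv p hp).continuousAt.continuousWithinAt) ?_ ?_ <;> rw [interior_Ioo]
  · exact fun p hp => (hderiv p hp).differentiableAt.differentiableWithinAt
  intro p hp
  rw [(hderiv p hp).deriv]
  refine div_nonpos_of_nonpos_of_nonneg ?_ (sq_nonneg _)
  have hentropy := h p hp
  rw [negMulLog, negMulLog] at hentropy
  rw [sub_nonpos, div_mul_eq_mul_div, ← div_eq_mul_inv, div_le_div_iff₀ (hpos p hp) hp.1]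
  linarith

section

variable {α : Type*}

open Classical in
/-- Members of `F` that are not subsets of `U` are ignored, so that the two families of the
induction step are just `F` and `insert a ⁻¹' F`. -/
noncomputable def biasedMeasureOn (U : Finset α) (F : Set (Finset α)) (p : ℝ) : ℝ :=
  ∑ A ∈ U.powerset with A ∈ F, p ^ #A * (1 - p) ^ (#U - #A)

theorem differentiable_biasedMeasureOn (U : Finset α) (F : Set (Finset α)) :
    Differentiable ℝ (biasedMeasureOn U F) := by
  unfold biasedMeasureOn
  fun_prop

theorem biasedMeasureOn_nonneg (U : Finset α) (F : Set (Finset α)) {p : ℝ}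
    (hp₀ : 0 ≤ p) (hp₁ : p ≤ 1) : 0 ≤ biasedMeasureOn U F p := by
  have : 0 ≤ 1 - p := by linarith
  exact sum_nonneg fun A _ => by positivity

theorem biasedMeasureOn_pos {U : Finset α} {F : Set (Finset α)} (hF : ∃ A ∈ F, A ⊆ U) {p : ℝ}
    (hp₀ : 0 < p) (hp₁ : p < 1) : 0 < biasedMeasureOn U F p := by
  classical
  obtain ⟨A, hAF, hAU⟩ := hF
  have : 0 < 1 - p := by linarith
  refine sum_pos' (fun B _ => by positivity) ⟨A, ?_, by positivity⟩
  simp [hAF, hAU]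

theorem biasedMeasureOn_mono (U : Finset α) {F G : Set (Finset α)} (hFG : F ⊆ G) {p : ℝ}
    (hp₀ : 0 ≤ p) (hp₁ : p ≤ 1) : biasedMeasureOn U F p ≤ biasedMeasureOn U G p := by
  classical
  have : 0 ≤ 1 - p := by linarith
  exact sum_le_sum_of_subset_of_nonneg (monotone_filter_right _ fun A _ h => hFG h)
    fun A _ _ => by positivity

open Classical in
theorem biasedMeasureOn_empty (F : Set (Finset α)) :
    biasedMeasureOn ∅ F = fun _ => if ∅ ∈ F then 1 else 0 := by
  funext p
  simp only [biasedMeasureOn, powerset_empty, filter_singleton, card_empty, zero_tsub, pow_zero,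
    mul_one]
  split_ifs <;> simp

theorem biasedMeasureOn_insert [DecidableEq α] {a : α} {s : Finset α} (ha : a ∉ s)
    (F : Set (Finset α)) (p : ℝ) :
    biasedMeasureOn (insert a s) F p =
      (1 - p) * biasedMeasureOn s F p + p * biasedMeasureOn s (insert a ⁻¹' F) p := by
  classical
  simp only [biasedMeasureOn, sum_filter, sum_powerset_insert ha, mul_sum, mul_ite, mul_zero,
    Set.mem_preimage, card_insert_of_notMem ha]
  congr 1 <;> refine sum_congr rfl fun A hA => if_congr Iff.rfl ?_ rfl
  · rw [Nat.sub_add_comm (card_le_card (mem_powerset.mp hA)), pow_succ]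
    ring
  · rw [card_insert_of_notMem fun h => ha (mem_powerset.mp hA h), Nat.add_sub_add_right, pow_succ]
    ring

theorem negMulLog_biasedMeasureOn_le (U : Finset α) {F : Set (Finset α)} (hF : IsUpperSet F)
    {p : ℝ} (hp₀ : 0 < p) (hp₁ : p < 1) :
    negMulLog (biasedMeasureOn U F p) ≤ negMulLog p * deriv (biasedMeasureOn U F) p := by
  classical
  induction U using Finset.induction_on generalizing F with
  | empty =>
    rw [biasedMeasureOn_empty, deriv_const]
    split_ifs <;> simp
  | insert a s ha ih =>
    set G := insert a ⁻¹' F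
    have hG : IsUpperSet G := hF.preimage fun A B => insert_subset_insert a
    have hFG : F ⊆ G := fun A hA => hF (subset_insert a A) hA
    have hderiv : deriv (biasedMeasureOn (insert a s) F) p =
        (1 - p) * deriv (biasedMeasureOn s F) p - biasedMeasureOn s F p +
          (p * deriv (biasedMeasureOn s G) p + biasedMeasureOn s G p) := by
      have hF' := (differentiable_biasedMeasureOn s F p).hasDerivAt
      have hG' := (differentiable_biasedMeasureOn s G p).hasDerivAt
      rw [funext (biasedMeasureOn_insert ha F)]
      exact ((((hasDerivAt_id' p).const_sub 1).fun_mul hF').fun_add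
        ((hasDerivAt_id' p).fun_mul hG')).deriv.trans (by ring)
    have hp : 0 ≤ negMulLog p := negMulLog_nonneg hp₀.le hp₁.le
    calc negMulLog (biasedMeasureOn (insert a s) F p)
        ≤ (1 - p) * negMulLog (biasedMeasureOn s F p) + p * negMulLog (biasedMeasureOn s G p) +
            negMulLog p * (biasedMeasureOn s G p - biasedMeasureOn s F p) := by
          rw [biasedMeasureOn_insert ha]
          exact negMulLog_convexCombination_le hp₀ hp₁ (biasedMeasureOn_nonneg s F hp₀.le hp₁.le)
            (biasedMeasureOn_mono s hFG hp₀.le hp₁.le)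
      _ ≤ (1 - p) * (negMulLog p * deriv (biasedMeasureOn s F) p) +
            p * (negMulLog p * deriv (biasedMeasureOn s G) p) +
            negMulLog p * (biasedMeasureOn s G p - biasedMeasureOn s F p) := by
          gcongr
          exacts [ih hF, ih hG]
      _ = negMulLog p * deriv (biasedMeasureOn (insert a s) F) p := by
          rw [hderiv]
          ring

end

theorem biasedMeasure_eq_biasedMeasureOn_univ (p : ℝ) (n : ℕ) (F : Finset (Finset (Fin n))) :
    biasedMeasure p n F = biasedMeasureOn univ (F : Set (Finset (Fin n))) p := by
  simp [biasedMeasure, biasedMeasureOn]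

theorem log_biased_measure_antitone_general (n : ℕ) (F : Finset (Finset (Fin n)))
    (hinc : ∀ A B : Finset (Fin n), B ∈ F → B ⊆ A → A ∈ F)
    (hne : F.Nonempty) :
    AntitoneOn (fun p => Real.log (biasedMeasure p n F) / Real.log p)
      (Set.Ioo (0 : ℝ) 1) := by
  have hF : IsUpperSet (F : Set (Finset (Fin n))) := fun B A hBA hB => hinc A B hB hBA
  obtain ⟨A, hA⟩ := hne
  simp_rw [biasedMeasure_eq_biasedMeasureOn_univ]
  exact antitoneOn_log_div_log (differentiable_biasedMeasureOn _ _)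
    (fun p hp => biasedMeasureOn_pos ⟨A, hA, subset_univ A⟩ hp.1 hp.2)
    (fun p hp => negMulLog_biasedMeasureOn_le _ hF hp.1 hp.2)

/-- For an increasing family F (nonempty and proper), p ↦ log_p(μ_p(F)) is
monotone non-increasing on (0,1). -/
theorem log_biased_measure_antitone (n : ℕ) (F : Finset (Finset (Fin n)))
    (hinc : ∀ A B : Finset (Fin n), B ∈ F → B ⊆ A → A ∈ F)
    (hne : F.Nonempty) (hproper : F ≠ Finset.univ) :
    AntitoneOn (fun p => Real.log (biasedMeasure p n F) / Real.log p)
      (Set.Ioo (0 : ℝ) 1) :=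
  log_biased_measure_antitone_general n F hinc hne
end

section
/- Let F ⊆ P([n]) be increasing with min over all i ∈ [n] of the influence I_i^p(F) at least c > 0, for some 0 < p < 1. Then n ≤ 1/(c² p (1−p)). -/
open Finset
open scoped Classical

/-- The set of i-influential elements of F. -/
noncomputable def influentialSet (n : ℕ) (F : Finset (Finset (Fin n))) (i : Fin n) :
    Finset (Finset (Fin n)) :=
  Finset.univ.filter (fun S => Xor' (S ∈ F) (symmDiff S {i} ∈ F))

/-! For increasing `F`, the correlation of `1_F` with the centred coordinate `x_i - p` under `μ_p`
is `p (1 - p) I_i^p(F)`. The characters `(x_i - p) / √(p (1 - p))` are orthonormal in `L²(μ_p)`,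
so Bessel's inequality gives `p (1 - p) ∑ᵢ I_i^p(F)² ≤ ‖1_F‖² = μ_p(F) ≤ 1`, and every term of the
sum is at least `c²`. -/

theorem Finset.sum_univ_eq_sum_powerset_erase {α M : Type*} [Fintype α] [DecidableEq α]
    [AddCommMonoid M] (i : α) (g : Finset α → M) :
    ∑ S, g S = ∑ T ∈ (univ.erase i).powerset, (g T + g (insert i T)) := by
  rw [sum_add_distrib, ← sum_powerset_insert (notMem_erase i _), insert_erase (mem_univ i),
    powerset_univ]

theorem Finset.symmDiff_singleton_of_notMem {α : Type*} [DecidableEq α] {i : α} {T : Finset α}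
    (hi : i ∉ T) : symmDiff T {i} = insert i T := by
  rw [(disjoint_singleton_right.2 hi).symmDiff_eq_sup, sup_eq_union, union_comm, ← insert_eq]

theorem Finset.symmDiff_insert_singleton_of_notMem {α : Type*} [DecidableEq α] {i : α}
    {T : Finset α} (hi : i ∉ T) : symmDiff (insert i T) {i} = T := by
  rw [← symmDiff_singleton_of_notMem hi, symmDiff_symmDiff_cancel_right]

section BiasedCube

variable {n : ℕ} (p : ℝ)

noncomputable def biasedWeight (S : Finset (Fin n)) : ℝ :=
  p ^ S.card * (1 - p) ^ (n - S.card)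

def biasedChar (i : Fin n) (S : Finset (Fin n)) : ℝ :=
  if i ∈ S then 1 - p else -p

theorem biasedWeight_nonneg {p : ℝ} (hp0 : 0 ≤ p) (hp1 : p ≤ 1) (S : Finset (Fin n)) :
    0 ≤ biasedWeight p S := by
  have := sub_nonneg.2 hp1
  unfold biasedWeight
  positivity

theorem sum_biasedWeight : ∑ S : Finset (Fin n), biasedWeight p S = 1 := by
  simpa [biasedWeight] using Fin.sum_pow_mul_eq_add_pow (n := n) p (1 - p)

theorem biasedMeasure_eq_sum (F : Finset (Finset (Fin n))) :
    biasedMeasure p n F = ∑ S ∈ F, biasedWeight p S :=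
  rfl

theorem biasedMeasure_le_one {p : ℝ} (hp0 : 0 ≤ p) (hp1 : p ≤ 1) (F : Finset (Finset (Fin n))) :
    biasedMeasure p n F ≤ 1 :=
  sum_biasedWeight p (n := n) ▸ sum_le_univ_sum_of_nonneg (biasedWeight_nonneg hp0 hp1)

theorem one_sub_mul_biasedWeight_insert {i : Fin n} {T : Finset (Fin n)} (hi : i ∉ T) :
    (1 - p) * biasedWeight p (insert i T) = p * biasedWeight p T := by
  have hT : T.card < n := by simpa using card_lt_univ_of_notMem hi
  obtain ⟨k, hk⟩ : ∃ k, n - T.card = k + 1 := ⟨n - T.card - 1, by omega⟩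
  have hk' : n - (T.card + 1) = k := by omega
  rw [biasedWeight, biasedWeight, card_insert_of_notMem hi, hk, hk', pow_succ, pow_succ]
  ring

theorem sum_biasedWeight_mul_biasedChar_mul_eq_zero (i : Fin n) {g : Finset (Fin n) → ℝ}
    (hg : ∀ T, i ∉ T → g (insert i T) = g T) :
    ∑ S, biasedWeight p S * (biasedChar p i S * g S) = 0 := by
  rw [sum_univ_eq_sum_powerset_erase i]
  refine sum_eq_zero fun T hT => ?_
  have hi := notMem_of_mem_powerset_of_notMem hT (notMem_erase i _)
  simp only [biasedChar, if_neg hi, if_pos (mem_insert_self i T), hg T hi]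
  linear_combination g T * one_sub_mul_biasedWeight_insert p hi

theorem sum_biasedWeight_mul_biasedChar_mul_biasedChar (i j : Fin n) :
    ∑ S, biasedWeight p S * (biasedChar p i S * biasedChar p j S) =
      if i = j then p * (1 - p) else 0 := by
  split_ifs with hij
  · subst hij
    calc _ = ∑ S, biasedWeight p S * (p * (1 - p)) := by
          rw [sum_univ_eq_sum_powerset_erase i, sum_univ_eq_sum_powerset_erase i]
          refine sum_congr rfl fun T hT => ?_
          have hi := notMem_of_mem_powerset_of_notMem hT (notMem_erase i _)
          simp only [biasedChar, if_neg hi, if_pos (mem_insert_self i T)]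
          linear_combination (1 - 2 * p) * one_sub_mul_biasedWeight_insert p hi
      _ = p * (1 - p) := by rw [← sum_mul, sum_biasedWeight, one_mul]
  · refine sum_biasedWeight_mul_biasedChar_mul_eq_zero p i fun T _ => ?_
    simp only [biasedChar, mem_insert, Ne.symm hij, false_or]

theorem mem_influentialSet {F : Finset (Finset (Fin n))} {i : Fin n} {S : Finset (Fin n)} :
    S ∈ influentialSet n F i ↔ Xor (S ∈ F) (symmDiff S {i} ∈ F) := by
  simp only [influentialSet, mem_filter, mem_univ, true_and]
  rfl

theorem sum_biasedWeight_mul_indicator_mul_biasedChar {F : Finset (Finset (Fin n))}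
    (hF : ∀ A B : Finset (Fin n), B ∈ F → B ⊆ A → A ∈ F) (i : Fin n) :
    ∑ S, biasedWeight p S * (biasedChar p i S * if S ∈ F then 1 else 0) =
      p * (1 - p) * biasedMeasure p n (influentialSet n F i) := by
  rw [biasedMeasure_eq_sum, ← Fintype.sum_ite_mem (influentialSet n F i), mul_sum,
    sum_univ_eq_sum_powerset_erase i, sum_univ_eq_sum_powerset_erase i]
  refine sum_congr rfl fun T hT => ?_
  have hi := notMem_of_mem_powerset_of_notMem hT (notMem_erase i _)
  have hw := one_sub_mul_biasedWeight_insert p hi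
  simp only [biasedChar, if_neg hi, if_pos (mem_insert_self i T), mem_influentialSet,
    symmDiff_singleton_of_notMem hi, symmDiff_insert_singleton_of_notMem hi]
  by_cases hTF : T ∈ F
  · simp only [hTF, hF _ _ hTF (subset_insert i T), if_true, xor_self, if_false]
    linear_combination hw
  · by_cases hIF : insert i T ∈ F
    · simp only [hTF, hIF, if_true, if_false, xor_true, xor_false, id, not_false_eq_true]
      linear_combination (1 - p) * hw
    · simp only [hTF, hIF, if_false, xor_self]
      ring

end BiasedCube

open scoped RealInnerProductSpace

section BiasedL2

variable {n : ℕ} {p : ℝ}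

variable (p) in
noncomputable def toBiasedL2 (f : Finset (Fin n) → ℝ) : EuclideanSpace ℝ (Finset (Fin n)) :=
  WithLp.toLp 2 fun S => √(biasedWeight p S) * f S

theorem inner_toBiasedL2 (hp0 : 0 ≤ p) (hp1 : p ≤ 1) (f g : Finset (Fin n) → ℝ) :
    ⟪toBiasedL2 p f, toBiasedL2 p g⟫ = ∑ S, biasedWeight p S * (f S * g S) := by
  simp only [toBiasedL2, PiLp.inner_apply, Real.inner_apply]
  refine sum_congr rfl fun S _ => ?_
  linear_combination f S * g S * Real.mul_self_sqrt (biasedWeight_nonneg hp0 hp1 S)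

theorem orthonormal_biasedChar (hp0 : 0 < p) (hp1 : p < 1) :
    Orthonormal ℝ fun i : Fin n => (√(p * (1 - p)))⁻¹ • toBiasedL2 p (biasedChar p i) := by
  have hq : 0 < p * (1 - p) := mul_pos hp0 (by linarith)
  refine orthonormal_iff_ite.2 fun i j => ?_
  rw [real_inner_smul_left, real_inner_smul_right, inner_toBiasedL2 hp0.le hp1.le,
    sum_biasedWeight_mul_biasedChar_mul_biasedChar]
  split_ifs
  · rw [← mul_assoc, ← mul_inv, Real.mul_self_sqrt hq.le, inv_mul_cancel₀ hq.ne']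
  · simp

theorem sum_sq_biasedMeasure_influentialSet_le (hp0 : 0 < p) (hp1 : p < 1)
    {F : Finset (Finset (Fin n))} (hF : ∀ A B : Finset (Fin n), B ∈ F → B ⊆ A → A ∈ F) :
    p * (1 - p) * ∑ i, biasedMeasure p n (influentialSet n F i) ^ 2 ≤ biasedMeasure p n F := by
  have hq : 0 < p * (1 - p) := mul_pos hp0 (by linarith)
  have bessel := (orthonormal_biasedChar hp0 hp1).sum_inner_products_le
    (toBiasedL2 p fun S => if S ∈ F then 1 else 0) (s := univ)
  rw [← real_inner_self_eq_norm_sq, inner_toBiasedL2 hp0.le hp1.le] at bessel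
  convert bessel using 1
  · rw [mul_sum]
    refine sum_congr rfl fun i _ => ?_
    rw [real_inner_smul_left, inner_toBiasedL2 hp0.le hp1.le,
      sum_biasedWeight_mul_indicator_mul_biasedChar p hF, Real.norm_eq_abs, sq_abs, mul_pow,
      mul_pow, inv_pow, Real.sq_sqrt hq.le]
    field_simp
  · rw [biasedMeasure_eq_sum, ← Fintype.sum_ite_mem F]
    exact sum_congr rfl fun S _ => by split_ifs <;> ring

end BiasedL2

/-- If all influences of an increasing family are at least c, then n ≤ 1/(c²p(1−p)). -/
theorem large_influences_bounded_n (n : ℕ) (p c : ℝ) (hp : 0 < p) (hp1 : p < 1)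
    (hc : 0 < c) (F : Finset (Finset (Fin n)))
    (hinc : ∀ A B : Finset (Fin n), B ∈ F → B ⊆ A → A ∈ F)
    (hmin : ∀ i : Fin n, c ≤ biasedMeasure p n (influentialSet n F i)) :
    (n : ℝ) ≤ 1 / (c ^ 2 * p * (1 - p)) := by
  have hq : 0 < p * (1 - p) := mul_pos hp (by linarith)
  rw [le_div_iff₀ (by positivity)]
  calc (n : ℝ) * (c ^ 2 * p * (1 - p)) = p * (1 - p) * ∑ _i : Fin n, c ^ 2 := by
        rw [sum_const, card_univ, Fintype.card_fin, nsmul_eq_mul]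
        ring
    _ ≤ p * (1 - p) * ∑ i, biasedMeasure p n (influentialSet n F i) ^ 2 := by
        gcongr with i
        exact hmin i
    _ ≤ biasedMeasure p n F := sum_sq_biasedMeasure_influentialSet_le hp hp1 hinc
    _ ≤ 1 := biasedMeasure_le_one hp.le hp1.le F
end
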